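/- arXiv:1402.2245 — 5 statements merged into one kernel-verified Lean document; each statement's English description precedes it below -/
import Mathlib

section
/- Let Σ be a signature and φ, ψ two Σ-algebra endomorphisms on the algebra of possibly infinite terms Ter^∞(Σ,V) that agree on all variables. Then φ = ψ. -/
namespace IRW

abbrev Pos := List ℕ

def arity {Sig V : Type} (ar : Sig → ℕ) : Sig ⊕ V → ℕ
  | Sum.inl f => ar f
  | Sum.inr _ => 0

abbrev PTerm (Sig V : Type) := Pos → Option (Sig ⊕ V)

variable {Sig V : Type}

def posOf (t : PTerm Sig V) : Set Pos := {p | (t p).isSome}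

def IsTerm (ar : Sig → ℕ) (t : PTerm Sig V) : Prop :=
  ([] : Pos) ∈ posOf t ∧
  (∀ p q : Pos, p ++ q ∈ posOf t → p ∈ posOf t) ∧
  (∀ (p : Pos) (h : Sig ⊕ V), t p = some h →
    ∀ i : ℕ, (p ++ [i]) ∈ posOf t ↔ 1 ≤ i ∧ i ≤ arity ar h)

def varT (x : V) : PTerm Sig V := fun p => if p = [] then some (Sum.inr x) else none

def mkFun (ar : Sig → ℕ) (f : Sig) (ts : ℕ → PTerm Sig V) : PTerm Sig V := fun p =>
  match p with
  | [] => some (Sum.inl f)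
  | i :: q => if 1 ≤ i ∧ i ≤ ar f then ts i q else none

def subAt (t : PTerm Sig V) (p : Pos) : PTerm Sig V := fun q => t (p ++ q)

def replAt (t u : PTerm Sig V) (p : Pos) : PTerm Sig V := fun q =>
  if p <+: q then u (q.drop p.length) else t q

def Disj (p q : Pos) : Prop := ¬ p <+: q ∧ ¬ q <+: p

open Classical in
noncomputable def tdist (t u : PTerm Sig V) : ℝ :=
  if t = u then 0
  else (2 : ℝ)⁻¹ ^ sInf {n : ℕ | ∃ p : Pos, p.length = n ∧ t p ≠ u p}

open Classical in
noncomputable def substExt (σ : V → PTerm Sig V) (t : PTerm Sig V) : PTerm Sig V := fun p =>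
  if h : ∃ x : V, ∃ p₀ q : Pos, p = p₀ ++ q ∧ t p₀ = some (Sum.inr x)
  then σ h.choose h.choose_spec.choose_spec.choose
  else t p

/-- `φ` is a `Σ`-algebra endomorphism of `Ter^∞(Σ,V)`: it maps terms to terms and
commutes with each function symbol. -/
def IsEndo {Sig V : Type} (ar : Sig → ℕ) (φ : PTerm Sig V → PTerm Sig V) : Prop :=
  (∀ t : PTerm Sig V, IsTerm ar t → IsTerm ar (φ t)) ∧
  (∀ (f : Sig) (ts : ℕ → PTerm Sig V),
    (∀ i : ℕ, 1 ≤ i → i ≤ ar f → IsTerm ar (ts i)) →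
    φ (mkFun ar f ts) = mkFun ar f (fun i => φ (ts i)))

namespace IsTerm

variable {ar : Sig → ℕ} {t : PTerm Sig V}

theorem subAt_of_mem (ht : IsTerm ar t) {p : Pos} (hp : p ∈ posOf t) :
    IsTerm ar (subAt t p) := by
  refine ⟨by simpa [posOf, subAt] using hp, fun q r hqr => ?_, fun q h hq i => ?_⟩
  · have : (p ++ q) ++ r ∈ posOf t := by
      simpa only [posOf, subAt, Set.mem_ofPred_eq, List.append_assoc] using hqr
    exact ht.2.1 _ _ this
  · simpa only [posOf, subAt, Set.mem_ofPred_eq, List.append_assoc] using ht.2.2 (p ++ q) h hq i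

theorem singleton_mem_posOf_iff (ht : IsTerm ar t) {h : Sig ⊕ V} (hroot : t [] = some h)
    (i : ℕ) : [i] ∈ posOf t ↔ 1 ≤ i ∧ i ≤ arity ar h :=
  ht.2.2 [] h hroot i

theorem apply_cons_eq_none (ht : IsTerm ar t) {h : Sig ⊕ V} (hroot : t [] = some h)
    {i : ℕ} (hi : ¬(1 ≤ i ∧ i ≤ arity ar h)) (q : Pos) : t (i :: q) = none := by
  by_contra hne
  have hmem : [i] ++ q ∈ posOf t := Option.ne_none_iff_isSome.mp hne
  exact hi ((ht.singleton_mem_posOf_iff hroot i).mp (ht.2.1 [i] q hmem))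

theorem eq_varT (ht : IsTerm ar t) {x : V} (hroot : t [] = some (Sum.inr x)) :
    t = varT x := by
  funext p
  cases p with
  | nil => simpa [varT] using hroot
  | cons i q => simpa [varT] using ht.apply_cons_eq_none hroot (by simp only [arity]; omega) q

theorem eq_mkFun (ht : IsTerm ar t) {f : Sig} (hroot : t [] = some (Sum.inl f)) :
    t = mkFun ar f (fun i => subAt t [i]) := by
  funext p
  cases p with
  | nil => simpa [mkFun] using hroot
  | cons i q =>
    by_cases hi : 1 ≤ i ∧ i ≤ ar f
    · simp only [mkFun, if_pos hi]; rfl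
    · simpa [mkFun, hi] using ht.apply_cons_eq_none hroot hi q

theorem subAt_singleton (ht : IsTerm ar t) {f : Sig} (hroot : t [] = some (Sum.inl f))
    {i : ℕ} (h1 : 1 ≤ i) (h2 : i ≤ ar f) : IsTerm ar (subAt t [i]) :=
  ht.subAt_of_mem ((ht.singleton_mem_posOf_iff hroot i).mpr ⟨h1, h2⟩)

end IsTerm

/-- Infinite terms admit no structural induction, so we induct on the position `p` instead. -/
theorem IsEndo.apply_eq_of_eq_varT {ar : Sig → ℕ} {φ ψ : PTerm Sig V → PTerm Sig V}
    (hφ : IsEndo ar φ) (hψ : IsEndo ar ψ) (hvar : ∀ x : V, φ (varT x) = ψ (varT x))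
    (p : Pos) : ∀ t : PTerm Sig V, IsTerm ar t → φ t p = ψ t p := by
  induction p with
  | nil => ?_ | cons i q ih => ?_
  all_goals
    intro t ht
    obtain ⟨h | x, hroot⟩ := Option.isSome_iff_exists.mp ht.1
    case inr => rw [ht.eq_varT hroot, hvar]
    have hsub := fun j => ht.subAt_singleton (i := j) hroot
    rw [ht.eq_mkFun hroot, hφ.2 h _ hsub, hψ.2 h _ hsub]
  · rfl
  · simp only [mkFun]
    split_ifs with hi
    exacts [ih _ (hsub i hi.1 hi.2), rfl]

/-- Two endomorphisms of `Ter^∞(Σ,V)` that agree on all variables are equal. -/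
theorem stmt9 {Sig V : Type} (ar : Sig → ℕ) (φ ψ : PTerm Sig V → PTerm Sig V)
    (hφ : IsEndo ar φ) (hψ : IsEndo ar ψ)
    (hvar : ∀ x : V, φ (varT x) = ψ (varT x)) :
    ∀ t : PTerm Sig V, IsTerm ar t → φ t = ψ t :=
  fun t ht => funext fun p => hφ.apply_eq_of_eq_varT hψ hvar p t ht

end IRW
end

section
/- Let ⟨a_α⟩_{α<β} be a strongly convergent (possibly transfinite) reduction sequence with source t, target u, and n < ω such that the depth of every step exceeds n. Then d(t,u) < 2^{-n}, where d is the term distance. -/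
/-!
`d(t, u) < 2^{-n}` says exactly that `t` and `u` agree on all positions of length at most `n`.
A step at depth greater than `n` only rewrites positions of length greater than `n`, so it
preserves this agreement; by transfinite induction every target of the sequence agrees with
its source up to depth `n`. At a limit stage, convergence makes the limit term agree up to
depth `n` with all sufficiently late targets, and hence with the source.
-/

namespace IRW

variable {Sig V : Type}

def IsStep (rules : Set (PTerm Sig V × PTerm Sig V)) (s : PTerm Sig V) (p : Pos)
    (t : PTerm Sig V) : Prop :=
  p ∈ posOf s ∧
  ∃ lr ∈ rules, ∃ σ : V → PTerm Sig V,
    subAt s p = substExt σ lr.1 ∧ t = replAt s (substExt σ lr.2) p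

structure RedSeq (ar : Sig → ℕ) (rules : Set (PTerm Sig V × PTerm Sig V))
    (β : Ordinal) where
  src : Ordinal → PTerm Sig V
  rpos : Ordinal → Pos
  tgt : Ordinal → PTerm Sig V
  srcTerm : ∀ α, α < β → IsTerm ar (src α)
  tgtTerm : ∀ α, α < β → IsTerm ar (tgt α)
  isStep : ∀ α, α < β → IsStep rules (src α) (rpos α) (tgt α)
  succCoh : ∀ α, α + 1 < β → src (α + 1) = tgt α
  limSrc : ∀ β₀, β₀ < β → Order.IsSuccLimit β₀ → ∀ n : ℕ,
    ∃ α₀, α₀ < β₀ ∧ ∀ α, α₀ < α → α < β₀ → tdist (tgt α) (src β₀) < (2 : ℝ)⁻¹ ^ n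
  limDepth : ∀ β₀, β₀ < β → Order.IsSuccLimit β₀ → ∀ n : ℕ,
    ∃ α₀, α₀ < β₀ ∧ ∀ α, α₀ < α → α < β₀ → n < (rpos α).length

def RedSeq.Converges {ar : Sig → ℕ} {rules : Set (PTerm Sig V × PTerm Sig V)} {β : Ordinal}
    (Sq : RedSeq ar rules β) (u : PTerm Sig V) : Prop :=
  (β = 0 ∧ u = Sq.src 0) ∨
  (∃ α, β = α + 1 ∧ u = Sq.tgt α) ∨
  (Order.IsSuccLimit β ∧
    (∀ n : ℕ, ∃ α₀, α₀ < β ∧ ∀ α, α₀ < α → α < β → tdist (Sq.tgt α) u < (2 : ℝ)⁻¹ ^ n) ∧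
    (∀ n : ℕ, ∃ α₀, α₀ < β ∧ ∀ α, α₀ < α → α < β → n < (Sq.rpos α).length))

def NF (rules : Set (PTerm Sig V × PTerm Sig V)) (t : PTerm Sig V) : Prop :=
  ∀ p u, ¬ IsStep rules t p u

theorem tdist_lt_two_inv_pow_iff {t u : PTerm Sig V} {n : ℕ} :
    tdist t u < (2 : ℝ)⁻¹ ^ n ↔ Set.EqOn t u {q : Pos | q.length ≤ n} := by
  classical
  unfold tdist
  split_ifs with htu
  · simp [htu, Set.eqOn_refl]
  · obtain ⟨p, hp⟩ : ∃ p, t p ≠ u p := Function.ne_iff.mp htu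
    have hdiff : {k : ℕ | ∃ p : Pos, p.length = k ∧ t p ≠ u p}.Nonempty := ⟨_, p, rfl, hp⟩
    rw [pow_lt_pow_iff_right_of_lt_one₀ (by norm_num) (by norm_num), ← Nat.succ_le_iff,
      le_csInf_iff'' hdiff]
    constructor
    · intro h q (hq : q.length ≤ n)
      by_contra hne
      exact absurd (h _ ⟨q, rfl, hne⟩) (by omega)
    · rintro h _ ⟨q, rfl, hq⟩
      by_contra hle
      exact hq (h (show q.length ≤ n by omega))

theorem eqOn_replAt {t u : PTerm Sig V} {p : Pos} :
    Set.EqOn (replAt t u p) t {q : Pos | q.length < p.length} :=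
  fun _ hq => if_neg fun hpq => (not_lt.mpr hpq.length_le) hq

theorem IsStep.eqOn {rules : Set (PTerm Sig V × PTerm Sig V)} {s t : PTerm Sig V} {p : Pos}
    {n : ℕ} (h : IsStep rules s p t) (hn : n < p.length) :
    Set.EqOn s t {q : Pos | q.length ≤ n} := by
  obtain ⟨-, -, -, -, -, rfl⟩ := h
  exact eqOn_replAt.symm.mono fun _ hq => lt_of_le_of_lt hq hn

theorem eqOn_of_tdist_lt_eventually {γ : Ordinal} (hγ : Order.IsSuccLimit γ)
    {s v : PTerm Sig V} {f : Ordinal → PTerm Sig V} {n : ℕ}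
    (hf : ∀ α < γ, Set.EqOn s (f α) {q : Pos | q.length ≤ n})
    (hv : ∃ α₀ < γ, ∀ α, α₀ < α → α < γ → tdist (f α) v < (2 : ℝ)⁻¹ ^ n) :
    Set.EqOn s v {q : Pos | q.length ≤ n} := by
  obtain ⟨α₀, hα₀, hclose⟩ := hv
  have hsucc : α₀ + 1 < γ := hγ.add_one_lt hα₀
  exact (hf _ hsucc).trans (tdist_lt_two_inv_pow_iff.mp (hclose _ (lt_add_one α₀) hsucc))

theorem RedSeq.eqOn_src_zero_tgt {ar : Sig → ℕ} {rules : Set (PTerm Sig V × PTerm Sig V)}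
    {β : Ordinal} (Sq : RedSeq ar rules β) {n : ℕ}
    (hdepth : ∀ α, α < β → n < (Sq.rpos α).length) :
    ∀ α < β, Set.EqOn (Sq.src 0) (Sq.tgt α) {q : Pos | q.length ≤ n} := by
  intro α
  induction α using Ordinal.limitRecOn with
  | zero => exact fun h => (Sq.isStep 0 h).eqOn (hdepth 0 h)
  | add_one γ ih =>
    intro hγβ
    have hsrc : Set.EqOn (Sq.src 0) (Sq.src (γ + 1)) {q : Pos | q.length ≤ n} := by
      rw [Sq.succCoh γ hγβ]
      exact ih ((lt_add_one γ).trans hγβ)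
    exact hsrc.trans ((Sq.isStep _ hγβ).eqOn (hdepth _ hγβ))
  | limit γ hγ ih =>
    intro hγβ
    have hsrc : Set.EqOn (Sq.src 0) (Sq.src γ) {q : Pos | q.length ≤ n} :=
      eqOn_of_tdist_lt_eventually hγ (fun α hα => ih α hα (hα.trans hγβ))
        (Sq.limSrc γ hγβ hγ n)
    exact hsrc.trans ((Sq.isStep γ hγβ).eqOn (hdepth γ hγβ))

/-- If every step of a strongly convergent reduction sequence from `t` to `u`
has depth greater than `n`, then `d(t,u) < 2^{-n}`. -/
theorem stmt11 {Sig V : Type} (ar : Sig → ℕ)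
    (rules : Set (PTerm Sig V × PTerm Sig V)) (β : Ordinal)
    (Sq : RedSeq ar rules β) (u : PTerm Sig V) (n : ℕ)
    (hconv : Sq.Converges u)
    (hdepth : ∀ α, α < β → n < (Sq.rpos α).length) :
    tdist (Sq.src 0) u < (2 : ℝ)⁻¹ ^ n := by
  rw [tdist_lt_two_inv_pow_iff]
  rcases hconv with ⟨-, rfl⟩ | ⟨α, rfl, rfl⟩ | ⟨hβ, hclose, -⟩
  · exact Set.eqOn_refl _ _
  · exact Sq.eqOn_src_zero_tgt hdepth α (lt_add_one α)
  · exact eqOn_of_tdist_lt_eventually hβ (Sq.eqOn_src_zero_tgt hdepth) (hclose n)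

end IRW
end

section
/- Let t →* u be a convergent (possibly transfinite) reduction sequence and p a position of t such that the redex position of every step in the sequence is disjoint from p. Then the subterm of t at p equals the subterm of u at p. -/
namespace IRW

variable {Sig V : Type}

/-!
Positions disjoint from `p` never touch the subterm at `p`, so every single step preserves
`t|_p`. By transfinite induction the subterm at `p` is then the same in every term of the
sequence: at a limit ordinal (and at the final limit `u`) the terms of the sequence eventually
agree with the limit up to any given depth, in particular at all positions below `p`.
-/

lemma not_prefix_append_of_disj {q p : Pos} (hd : Disj q p) (r : Pos) : ¬ q <+: p ++ r :=
  fun hqr => (List.prefix_or_prefix_of_prefix hqr (List.prefix_append p r)).elim hd.1 hd.2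

lemma subAt_replAt_of_disj {s t : PTerm Sig V} {q p : Pos} (hd : Disj q p) :
    subAt (replAt s t q) p = subAt s p := by
  funext r
  simp only [subAt, replAt, if_neg (not_prefix_append_of_disj hd r)]

lemma IsStep.subAt_eq_of_disj {rules : Set (PTerm Sig V × PTerm Sig V)} {s t : PTerm Sig V}
    {q p : Pos} (h : IsStep rules s q t) (hd : Disj q p) : subAt t p = subAt s p := by
  obtain ⟨-, lr, -, σ, -, rfl⟩ := h
  exact subAt_replAt_of_disj hd

lemma apply_eq_of_tdist_lt {t u : PTerm Sig V} {n : ℕ} (h : tdist t u < (2 : ℝ)⁻¹ ^ n)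
    {q : Pos} (hq : q.length ≤ n) : t q = u q := by
  by_contra hne
  have htu : t ≠ u := fun h' => hne (by rw [h'])
  rw [tdist, if_neg htu] at h
  have hle : sInf {m : ℕ | ∃ p : Pos, p.length = m ∧ t p ≠ u p} ≤ n :=
    (Nat.sInf_le (show q.length ∈ {m : ℕ | ∃ p : Pos, p.length = m ∧ t p ≠ u p} from
      ⟨q, rfl, hne⟩)).trans hq
  have := pow_le_pow_of_le_one (by norm_num : (0 : ℝ) ≤ 2⁻¹) (by norm_num) hle
  linarith

lemma subAt_eq_of_eventually_tdist_lt {f : Ordinal → PTerm Sig V} {t s : PTerm Sig V}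
    {γ : Ordinal} {p : Pos} (hγ : Order.IsSuccLimit γ)
    (hclose : ∀ n : ℕ, ∃ α₀, α₀ < γ ∧ ∀ α, α₀ < α → α < γ → tdist (f α) t < (2 : ℝ)⁻¹ ^ n)
    (hf : ∀ α, α < γ → subAt (f α) p = s) : subAt t p = s := by
  funext q
  obtain ⟨α₀, hα₀, hα₀close⟩ := hclose (p ++ q).length
  have hsucc : α₀ + 1 < γ := hγ.succ_lt hα₀
  calc subAt t p q = f (α₀ + 1) (p ++ q) :=
        (apply_eq_of_tdist_lt (hα₀close _ (Order.lt_succ α₀) hsucc) le_rfl).symm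
    _ = s q := congrFun (hf _ hsucc) q

namespace RedSeq

variable {ar : Sig → ℕ} {rules : Set (PTerm Sig V × PTerm Sig V)} {β : Ordinal}
  (Sq : RedSeq ar rules β) {p : Pos}

lemma subAt_tgt_eq_subAt_src {α : Ordinal} (hα : α < β) (hd : Disj (Sq.rpos α) p) :
    subAt (Sq.tgt α) p = subAt (Sq.src α) p :=
  (Sq.isStep α hα).subAt_eq_of_disj hd

lemma subAt_src_eq_subAt_src_zero (hdisj : ∀ α, α < β → Disj (Sq.rpos α) p) :
    ∀ α, α < β → subAt (Sq.src α) p = subAt (Sq.src 0) p := by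
  intro α
  induction α using Ordinal.limitRecOn with
  | zero => exact fun _ => rfl
  | add_one α ih =>
    intro hsucc
    have hα : α < β := (Order.lt_succ α).trans hsucc
    rw [Sq.succCoh α hsucc, Sq.subAt_tgt_eq_subAt_src hα (hdisj α hα), ih hα]
  | limit γ hγ ih =>
    intro hγβ
    refine subAt_eq_of_eventually_tdist_lt hγ (Sq.limSrc γ hγβ hγ) fun α hαγ => ?_
    have hαβ := hαγ.trans hγβ
    rw [Sq.subAt_tgt_eq_subAt_src hαβ (hdisj α hαβ), ih α hαγ hαβ]

lemma subAt_tgt_eq_subAt_src_zero (hdisj : ∀ α, α < β → Disj (Sq.rpos α) p)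
    {α : Ordinal} (hα : α < β) : subAt (Sq.tgt α) p = subAt (Sq.src 0) p := by
  rw [Sq.subAt_tgt_eq_subAt_src hα (hdisj α hα), Sq.subAt_src_eq_subAt_src_zero hdisj α hα]

end RedSeq

theorem stmt12_general {Sig V : Type} (ar : Sig → ℕ)
    (rules : Set (PTerm Sig V × PTerm Sig V)) (β : Ordinal)
    (Sq : RedSeq ar rules β) (u : PTerm Sig V)
    (hconv : Sq.Converges u) (p : Pos)
    (hdisj : ∀ α, α < β → Disj (Sq.rpos α) p) :
    subAt (Sq.src 0) p = subAt u p := by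
  rcases hconv with ⟨-, rfl⟩ | ⟨α, rfl, rfl⟩ | ⟨hlim, hclose, -⟩
  · rfl
  · exact (Sq.subAt_tgt_eq_subAt_src_zero hdisj (Order.lt_succ α)).symm
  · exact (subAt_eq_of_eventually_tdist_lt hlim hclose
      fun α hα => Sq.subAt_tgt_eq_subAt_src_zero hdisj hα).symm

/-- If the redex position of every step of a convergent reduction sequence from `t`
to `u` is disjoint from `p`, then `t|_p = u|_p`. -/
theorem stmt12 {Sig V : Type} (ar : Sig → ℕ)
    (rules : Set (PTerm Sig V × PTerm Sig V)) (β : Ordinal)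
    (Sq : RedSeq ar rules β) (u : PTerm Sig V)
    (hconv : Sq.Converges u) (p : Pos) (hp : p ∈ posOf (Sq.src 0))
    (hdisj : ∀ α, α < β → Disj (Sq.rpos α) p) :
    subAt (Sq.src 0) p = subAt u p :=
  stmt12_general ar rules β Sq u hconv p hdisj

end IRW
end

section
/- Every (possibly infinitary) term rewriting system that is disjoint (no function symbol occurs both in a left-hand side and in a right-hand side of its rules) and has no collapsing rules is strongly normalizing in the infinitary sense: it admits no divergent strongly continuous reduction sequence. -/
namespace IRW

variable {Sig V : Type}

/-!
A contraction at a position `p` leaves at `p` the root symbol of a right-hand side (the rules are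
non-collapsing), and by disjointness no left-hand side has that root symbol. So the symbol at `p`
must change before the next contraction at `p`, which needs a step strictly above `p`: once the
steps above `p` have stopped, at most one step happens at `p`.

In a sequence of limit length this shows, by induction on `n`, that depths eventually exceed `n`:
once all steps have depth `≥ n`, the part of the term above depth `n` is frozen, so there are only
finitely many positions of depth `n` (terms are finitely branching), each used by at most one
more step. Hence depths tend to infinity, and every position is eventually untouched, which
defines the limit term.
-/

section Terms

variable {ar : Sig → ℕ} {t w : PTerm Sig V}

lemma IsTerm.eq_varT_of_apply_nil (ht : IsTerm ar t) {x : V} (h : t [] = some (Sum.inr x)) :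
    t = varT x := by
  funext p
  match p with
  | [] => simpa [varT] using h
  | i :: q =>
    have hi : ([i] : Pos) ∉ posOf t := by
      intro hm
      have := (ht.2.2 [] (Sum.inr x) h i).mp (by simpa using hm)
      simp only [arity] at this
      omega
    have hiq : t (i :: q) = none := by
      by_contra hne
      exact hi (ht.2.1 [i] q (Option.isSome_iff_ne_none.mpr hne))
    simp [varT, hiq]

lemma IsTerm.exists_apply_nil_eq_inl (ht : IsTerm ar t) (hnv : ∀ x : V, t ≠ varT x) :
    ∃ f, t [] = some (Sum.inl f) := by
  obtain ⟨h, hh⟩ := Option.isSome_iff_exists.mp ht.1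
  cases h with
  | inl f => exact ⟨f, hh⟩
  | inr x => exact absurd (ht.eq_varT_of_apply_nil hh) (hnv x)

lemma IsTerm.append_singleton_mem_posOf_iff (ht : IsTerm ar t) {p : Pos} {i : ℕ} :
    p ++ [i] ∈ posOf t ↔ ∃ h, t p = some h ∧ 1 ≤ i ∧ i ≤ arity ar h := by
  constructor
  · intro hi
    obtain ⟨h, hh⟩ := Option.isSome_iff_exists.mp (ht.2.1 p [i] hi)
    exact ⟨h, hh, (ht.2.2 p h hh i).mp hi⟩
  · rintro ⟨h, hh, hi⟩
    exact (ht.2.2 p h hh i).mpr hi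

lemma IsTerm.finite_children (ht : IsTerm ar t) (p : Pos) : {i | p ++ [i] ∈ posOf t}.Finite := by
  simp only [ht.append_singleton_mem_posOf_iff]
  cases hp : t p with
  | none => simp
  | some h =>
    refine (Set.finite_Icc 1 (arity ar h)).subset ?_
    rintro i ⟨_, hh, hi⟩
    cases hh
    exact hi

lemma IsTerm.finite_posOf_length (ht : IsTerm ar t) (k : ℕ) :
    {q | q ∈ posOf t ∧ q.length = k}.Finite := by
  induction k with
  | zero => exact (Set.finite_singleton []).subset fun q ⟨_, hq⟩ => List.eq_nil_of_length_eq_zero hq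
  | succ k ih =>
    refine (ih.biUnion fun p _ => (ht.finite_children p).image fun i => p ++ [i]).subset ?_
    rintro q ⟨hq, hlen⟩
    obtain rfl | ⟨p, i, rfl⟩ := q.eq_nil_or_concat'
    · simp at hlen
    · simp only [List.length_append, List.length_singleton, Nat.add_right_cancel_iff] at hlen
      exact Set.mem_biUnion ⟨ht.2.1 p [i] hq, hlen⟩ ⟨i, hq, rfl⟩

lemma IsTerm.mem_posOf_iff_of_agree (ht : IsTerm ar t) (hw : IsTerm ar w) {q : Pos}
    (h : ∀ p : Pos, p.length < q.length → t p = w p) : q ∈ posOf t ↔ q ∈ posOf w := by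
  obtain rfl | ⟨p, i, rfl⟩ := q.eq_nil_or_concat'
  · exact iff_of_true ht.1 hw.1
  · rw [ht.append_singleton_mem_posOf_iff, hw.append_singleton_mem_posOf_iff, h p (by simp)]

end Terms

lemma substExt_apply_nil {σ : V → PTerm Sig V} {t : PTerm Sig V} {f : Sig}
    (h : t [] = some (Sum.inl f)) : substExt σ t [] = t [] := by
  unfold substExt
  rw [dif_neg]
  rintro ⟨x, p₀, q, hpq, ht⟩
  rw [(List.append_eq_nil_iff.mp hpq.symm).1, h] at ht
  exact Sum.inl_ne_inr (Option.some_injective _ ht)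

lemma tdist_lt_iff {t u : PTerm Sig V} {n : ℕ} :
    tdist t u < (2 : ℝ)⁻¹ ^ n ↔ ∀ p : Pos, p.length ≤ n → t p = u p := by
  unfold tdist
  split_ifs with h
  · subst h
    simp only [implies_true, iff_true]
    positivity
  · obtain ⟨p₀, hp₀⟩ : ∃ p, t p ≠ u p := by
      by_contra! hc
      exact h (funext hc)
    rw [pow_lt_pow_iff_right_of_lt_one₀ (by norm_num) (by norm_num)]
    constructor
    · intro hlt p hlen
      by_contra hne
      have := Nat.sInf_le (s := {n | ∃ p : Pos, p.length = n ∧ t p ≠ u p}) ⟨p, rfl, hne⟩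
      omega
    · intro hag
      obtain ⟨p, hlen, hne⟩ := Nat.sInf_mem (s := {n | ∃ p : Pos, p.length = n ∧ t p ≠ u p})
        ⟨p₀.length, p₀, rfl, hp₀⟩
      by_contra hc
      exact hne (hag p (by omega))

section Steps

variable {rules : Set (PTerm Sig V × PTerm Sig V)} {s t : PTerm Sig V} {p : Pos}

lemma IsStep.apply_of_not_prefix (hstep : IsStep rules s p t) {q : Pos} (h : ¬ p <+: q) :
    t q = s q := by
  obtain ⟨-, lr, -, σ, -, rfl⟩ := hstep
  exact if_neg h

lemma IsStep.exists_apply_eq_lhs (hstep : IsStep rules s p t)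
    (hlhs : ∀ lr ∈ rules, ∃ f, lr.1 [] = some (Sum.inl f)) : ∃ lr ∈ rules, s p = lr.1 [] := by
  obtain ⟨-, lr, hlr, σ, hsub, -⟩ := hstep
  obtain ⟨f, hf⟩ := hlhs lr hlr
  refine ⟨lr, hlr, ?_⟩
  rw [← substExt_apply_nil (σ := σ) hf, ← hsub]
  exact congrArg s (List.append_nil p).symm

lemma IsStep.exists_apply_eq_rhs (hstep : IsStep rules s p t)
    (hrhs : ∀ lr ∈ rules, ∃ f, lr.2 [] = some (Sum.inl f)) : ∃ lr ∈ rules, t p = lr.2 [] := by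
  obtain ⟨-, lr, hlr, σ, -, rfl⟩ := hstep
  obtain ⟨f, hf⟩ := hrhs lr hlr
  refine ⟨lr, hlr, ?_⟩
  rw [← substExt_apply_nil (σ := σ) hf]
  simp [replAt]

end Steps

def NoRedexAtContractumRoot (rules : Set (PTerm Sig V × PTerm Sig V)) : Prop :=
  ∀ (s t s' t' : PTerm Sig V) (p : Pos),
    IsStep rules s p t → IsStep rules s' p t' → t p ≠ s' p

lemma noRedexAtContractumRoot_of_disjoint {ar : Sig → ℕ}
    {rules : Set (PTerm Sig V × PTerm Sig V)}
    (hterm : ∀ lr ∈ rules, IsTerm ar lr.1 ∧ IsTerm ar lr.2)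
    (hnotvar : ∀ lr ∈ rules, ∀ x : V, lr.1 ≠ varT x)
    (hdisj : ∀ lr ∈ rules, ∀ lr' ∈ rules, ∀ (f : Sig) (p q : Pos),
      lr.1 p = some (Sum.inl f) → lr'.2 q ≠ some (Sum.inl f))
    (hnocoll : ∀ lr ∈ rules, ∀ x : V, lr.2 ≠ varT x) :
    NoRedexAtContractumRoot rules := by
  have hlhs lr (hlr : lr ∈ rules) := (hterm lr hlr).1.exists_apply_nil_eq_inl (hnotvar lr hlr)
  have hrhs lr (hlr : lr ∈ rules) := (hterm lr hlr).2.exists_apply_nil_eq_inl (hnocoll lr hlr)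
  intro s t s' t' p hstep hstep'
  obtain ⟨lr, hlr, ht⟩ := hstep.exists_apply_eq_rhs hrhs
  obtain ⟨lr', hlr', hs'⟩ := hstep'.exists_apply_eq_lhs hlhs
  obtain ⟨f, hf⟩ := hlhs lr' hlr'
  rw [ht, hs', hf]
  exact hdisj lr' hlr' lr hlr f [] [] hf

namespace RedSeq

variable {ar : Sig → ℕ} {rules : Set (PTerm Sig V × PTerm Sig V)} {β : Ordinal}
  (Sq : RedSeq ar rules β)

lemma exists_src_apply_eq_tgt_apply {α₁ α₂ : Ordinal} (h12 : α₁ < α₂) (h2 : α₂ < β) (p : Pos) :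
    ∃ γ, α₁ ≤ γ ∧ γ < α₂ ∧ Sq.src α₂ p = Sq.tgt γ p := by
  rcases Ordinal.zero_or_succ_or_isSuccLimit α₂ with rfl | ⟨γ, rfl⟩ | hlim
  · exact absurd h12 not_lt_zero
  · refine ⟨γ, Order.lt_succ_iff.mp h12, Order.lt_succ γ, ?_⟩
    rw [Order.succ_eq_add_one] at h2 ⊢
    rw [Sq.succCoh γ h2]
  · obtain ⟨α₀, hα₀, hclose⟩ := Sq.limSrc α₂ h2 hlim p.length
    have hlt : Order.succ (max α₀ α₁) < α₂ := hlim.succ_lt (max_lt hα₀ h12)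
    refine ⟨_, (le_max_right _ _).trans (Order.le_succ _), hlt, ?_⟩
    have hα₀lt : α₀ < Order.succ (max α₀ α₁) := (le_max_left _ _).trans_lt (Order.lt_succ _)
    exact (tdist_lt_iff.mp (hclose _ hα₀lt hlt) p le_rfl).symm

lemma src_apply_eq_tgt_apply {p : Pos} {α₁ α₂ : Ordinal} (h12 : α₁ < α₂) (h2 : α₂ < β)
    (hno : ∀ γ, α₁ < γ → γ < α₂ → ¬ Sq.rpos γ <+: p) : Sq.src α₂ p = Sq.tgt α₁ p := by
  induction α₂ using WellFoundedLT.induction with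
  | _ α₂ ih =>
  obtain ⟨γ, h1γ, hγ2, hsrc⟩ := Sq.exists_src_apply_eq_tgt_apply h12 h2 p
  rcases h1γ.eq_or_lt with rfl | h1γ
  · exact hsrc
  · rw [hsrc, (Sq.isStep γ (hγ2.trans h2)).apply_of_not_prefix (hno γ h1γ hγ2),
      ih γ hγ2 h1γ (hγ2.trans h2) fun δ h1δ hδγ => hno δ h1δ (hδγ.trans hγ2)]

lemma tgt_apply_eq_tgt_apply {q : Pos} {δ α α' : Ordinal}
    (hno : ∀ γ, δ < γ → γ < β → ¬ Sq.rpos γ <+: q)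
    (hα : δ < α) (hαβ : α < β) (hα' : δ < α') (hα'β : α' < β) : Sq.tgt α q = Sq.tgt α' q := by
  wlog hle : α ≤ α' generalizing α α'
  · exact (this hα' hα'β hα hαβ (le_of_not_ge hle)).symm
  rcases hle.eq_or_lt with rfl | hlt
  · rfl
  · rw [(Sq.isStep α' hα'β).apply_of_not_prefix (hno α' hα' hα'β),
      Sq.src_apply_eq_tgt_apply hlt hα'β fun γ h1 h2 => hno γ (hα.trans h1) (h2.trans hα'β)]

lemma subsingleton_steps_at (hR : NoRedexAtContractumRoot rules) {δ : Ordinal} {p : Pos}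
    (hno : ∀ γ, δ < γ → γ < β → Sq.rpos γ <+: p → Sq.rpos γ = p) :
    {α | δ < α ∧ α < β ∧ Sq.rpos α = p}.Subsingleton := by
  suffices ∀ α α', δ < α → α < α' → α' < β → Sq.rpos α = p → Sq.rpos α' ≠ p by
    rintro α ⟨hδα, hαβ, hα⟩ α' ⟨hδα', hα'β, hα'⟩
    rcases lt_trichotomy α α' with h | h | h
    · exact absurd hα' (this α α' hδα h hα'β hα)
    · exact h
    · exact absurd hα (this α' α hδα' h hαβ hα')
  intro α α' hδα hαα' hα'β hα hα'
  obtain ⟨γ, ⟨hαγ, hγβ, hγ⟩, hmin⟩ :=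
    wellFounded_lt.has_min {γ | α < γ ∧ γ < β ∧ Sq.rpos γ = p} ⟨α', hαα', hα'β, hα'⟩
  have hsrc : Sq.src γ p = Sq.tgt α p :=
    Sq.src_apply_eq_tgt_apply hαγ hγβ fun ε hαε hεγ hpre =>
      hmin ε ⟨hαε, hεγ.trans hγβ, hno ε (hδα.trans hαε) (hεγ.trans hγβ) hpre⟩ hεγ
  have hαβ := hαα'.trans hα'β
  exact hR _ _ _ _ p (hα ▸ Sq.isStep α hαβ) (hγ ▸ Sq.isStep γ hγβ) hsrc.symm

lemma finite_steps_at_length (hR : NoRedexAtContractumRoot rules) {δ : Ordinal} (hδ : δ < β)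
    {n : ℕ} (hdepth : ∀ γ, δ < γ → γ < β → n ≤ (Sq.rpos γ).length) :
    {α | δ < α ∧ α < β ∧ (Sq.rpos α).length = n}.Finite := by
  have hmaps : Set.MapsTo Sq.rpos {α | δ < α ∧ α < β ∧ (Sq.rpos α).length = n}
      {q | q ∈ posOf (Sq.tgt δ) ∧ q.length = n} := by
    rintro α ⟨hδα, hαβ, hlen⟩
    refine ⟨((Sq.srcTerm α hαβ).mem_posOf_iff_of_agree (Sq.tgtTerm δ hδ) fun q hq => ?_).mp
      (Sq.isStep α hαβ).1, hlen⟩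
    refine Sq.src_apply_eq_tgt_apply hδα hαβ fun γ hδγ hγα hpre => ?_
    have := hpre.length_le
    have := hdepth γ hδγ (hγα.trans hαβ)
    omega
  refine Set.Finite.of_injOn hmaps ?_ ((Sq.tgtTerm δ hδ).finite_posOf_length n)
  rintro α ⟨hδα, hαβ, hlen⟩ α' ⟨hδα', hα'β, -⟩ hpos
  refine Sq.subsingleton_steps_at hR (p := Sq.rpos α) (fun γ hδγ hγβ hpre => ?_)
    ⟨hδα, hαβ, rfl⟩ ⟨hδα', hα'β, hpos.symm⟩
  exact hpre.eq_of_length (le_antisymm hpre.length_le (hlen ▸ hdepth γ hδγ hγβ))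

lemma exists_forall_le_length_rpos (hR : NoRedexAtContractumRoot rules)
    (hlim : Order.IsSuccLimit β) (n : ℕ) :
    ∃ δ < β, ∀ α, δ < α → α < β → n ≤ (Sq.rpos α).length := by
  induction n with
  | zero => exact ⟨0, hlim.bot_lt, fun _ _ _ => Nat.zero_le _⟩
  | succ n ih =>
    obtain ⟨δ, hδ, hdepth⟩ := ih
    set F := {α | δ < α ∧ α < β ∧ (Sq.rpos α).length = n}
    obtain ⟨γ, hγ, hmax⟩ := Set.exists_max_image (insert δ F) id
      ((Sq.finite_steps_at_length hR hδ hdepth).insert δ) (Set.insert_nonempty δ F)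
    refine ⟨γ, hγ.elim (· ▸ hδ) (·.2.1), fun α hγα hαβ => ?_⟩
    have hδα : δ < α := (hmax δ (Set.mem_insert δ F)).trans_lt hγα
    have hne : (Sq.rpos α).length ≠ n := fun hlen =>
      (hmax α (Set.mem_insert_of_mem δ ⟨hδα, hαβ, hlen⟩)).not_gt hγα
    have := hdepth α hδα hαβ
    omega

lemma exists_converges_of_isSuccLimit (hR : NoRedexAtContractumRoot rules)
    (hlim : Order.IsSuccLimit β) : ∃ u, Sq.Converges u := by
  choose δ hδ hdepth using Sq.exists_forall_le_length_rpos hR hlim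
  have hstable {q : Pos} {m : ℕ} (hq : q.length < m) {α α' : Ordinal} (hα : δ m < α)
      (hαβ : α < β) (hα' : δ m < α') (hα'β : α' < β) : Sq.tgt α q = Sq.tgt α' q := by
    refine Sq.tgt_apply_eq_tgt_apply (fun γ hδγ hγβ hpre => ?_) hα hαβ hα' hα'β
    have := hpre.length_le
    have := hdepth m γ hδγ hγβ
    omega
  refine ⟨fun q => Sq.tgt (Order.succ (δ (q.length + 1))) q, Or.inr (Or.inr ⟨hlim, fun n => ?_,
    fun n => ⟨δ (n + 1), hδ _, fun α hα hαβ => hdepth (n + 1) α hα hαβ⟩⟩)⟩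
  refine ⟨δ (n + 1), hδ _, fun α hα hαβ => tdist_lt_iff.mpr fun q hq => ?_⟩
  set γ := Order.succ (max (δ (n + 1)) (δ (q.length + 1)))
  have hγβ : γ < β := hlim.succ_lt (max_lt (hδ _) (hδ _))
  rw [hstable (Nat.lt_succ_of_le hq) hα hαβ ((le_max_left _ _).trans_lt (Order.lt_succ _)) hγβ]
  exact hstable (Nat.lt_succ_self _) ((le_max_right _ _).trans_lt (Order.lt_succ _)) hγβ
    (Order.lt_succ _) (hlim.succ_lt (hδ _))

end RedSeq

theorem stmt13_general {Sig V : Type} (ar : Sig → ℕ)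
    (rules : Set (PTerm Sig V × PTerm Sig V))
    (hterm : ∀ lr ∈ rules, IsTerm ar lr.1 ∧ IsTerm ar lr.2)
    (hnotvar : ∀ lr ∈ rules, ∀ x : V, lr.1 ≠ varT x)
    (hdisj : ∀ lr ∈ rules, ∀ lr' ∈ rules, ∀ (f : Sig) (p q : Pos),
      lr.1 p = some (Sum.inl f) → lr'.2 q ≠ some (Sum.inl f))
    (hnocoll : ∀ lr ∈ rules, ∀ x : V, lr.2 ≠ varT x) :
    ∀ (β : Ordinal) (Sq : RedSeq ar rules β), ∃ u : PTerm Sig V, Sq.Converges u := by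
  intro β Sq
  have hR := noRedexAtContractumRoot_of_disjoint hterm hnotvar hdisj hnocoll
  rcases Ordinal.zero_or_succ_or_isSuccLimit β with rfl | ⟨α, rfl⟩ | hlim
  · exact ⟨Sq.src 0, Or.inl ⟨rfl, rfl⟩⟩
  · exact ⟨Sq.tgt α, Or.inr (Or.inl ⟨α, Order.succ_eq_add_one α, rfl⟩)⟩
  · exact Sq.exists_converges_of_isSuccLimit hR hlim

/-- A disjoint TRS without collapsing rules is `SN^∞`: every strongly continuous
reduction sequence is strongly convergent. -/
theorem stmt13 {Sig V : Type} (ar : Sig → ℕ)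
    (rules : Set (PTerm Sig V × PTerm Sig V))
    (hterm : ∀ lr ∈ rules, IsTerm ar lr.1 ∧ IsTerm ar lr.2)
    (hfin : ∀ lr ∈ rules, (posOf lr.1).Finite)
    (hnotvar : ∀ lr ∈ rules, ∀ x : V, lr.1 ≠ varT x)
    (hvars : ∀ lr ∈ rules, ∀ (x : V) (p : Pos),
      lr.2 p = some (Sum.inr x) → ∃ q : Pos, lr.1 q = some (Sum.inr x))
    (hdisj : ∀ lr ∈ rules, ∀ lr' ∈ rules, ∀ (f : Sig) (p q : Pos),
      lr.1 p = some (Sum.inl f) → lr'.2 q ≠ some (Sum.inl f))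
    (hnocoll : ∀ lr ∈ rules, ∀ x : V, lr.2 ≠ varT x) :
    ∀ (β : Ordinal) (Sq : RedSeq ar rules β), ∃ u : PTerm Sig V, Sq.Converges u :=
  stmt13_general ar rules hterm hnotvar hdisj hnocoll

end IRW
end

section
/- Let ψ be an infinitary multistep admitting an infinite collapsing sequence starting at the root position ε. Then ψ is not weakly normalizing with respect to the target TRS tgt_T: no reduction of ψ in tgt_T reaches a normal form. -/
/-!
Having an infinite collapsing sequence at the root is invariant under `tgt_T`-steps: a step
that contracts one of its collapsing rule symbols `μ(x₁, …, xₙ) → x_j` merely deletes that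
link, and any other step happens away from the sequence. The property is also closed under
limits, since a collapsing rule symbol determines the argument to descend into, so the first
`n` positions of the sequence depend only on the term up to depth `n`. Hence the limit of a
strongly convergent reduction still has a collapsing rule symbol at its root, which is a
`tgt_T`-redex.
-/

namespace IRW

variable {Sig V : Type}

structure RuleSys (Sig : Type) (ar : Sig → ℕ) where
  R : Type
  rar : R → ℕ
  lhs : R → PTerm Sig ℕ
  rhs : R → PTerm Sig ℕ

def arS (ar : Sig → ℕ) (S : RuleSys Sig ar) : (Sig ⊕ S.R) → ℕ
  | Sum.inl f => ar f
  | Sum.inr μ => S.rar μ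

def liftT {ar : Sig → ℕ} (S : RuleSys Sig ar) (t : PTerm Sig ℕ) : PTerm (Sig ⊕ S.R) ℕ :=
  fun p => (t p).map (Sum.map Sum.inl id)

def Closed (t : PTerm Sig V) : Prop := ∀ p x, t p ≠ some (Sum.inr x)

def CollSeq {ar : Sig → ℕ} (S : RuleSys Sig ar) (ψ : PTerm (Sig ⊕ S.R) ℕ)
    (ps : ℕ → Pos) (n : ℕ) : Prop :=
  ∀ i : ℕ, i + 1 < n → ∃ (μ : S.R) (j : ℕ),
    ψ (ps i) = some (Sum.inl (Sum.inr μ)) ∧ 1 ≤ j ∧ j ≤ S.rar μ ∧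
    S.rhs μ = varT j ∧ ps (i + 1) = ps i ++ [j]

def CollSeqInf {ar : Sig → ℕ} (S : RuleSys Sig ar) (ψ : PTerm (Sig ⊕ S.R) ℕ)
    (ps : ℕ → Pos) : Prop :=
  ∀ i : ℕ, ∃ (μ : S.R) (j : ℕ),
    ψ (ps i) = some (Sum.inl (Sum.inr μ)) ∧ 1 ≤ j ∧ j ≤ S.rar μ ∧
    S.rhs μ = varT j ∧ ps (i + 1) = ps i ++ [j]

def ruleHead {ar : Sig → ℕ} (S : RuleSys Sig ar) (μ : S.R) : PTerm (Sig ⊕ S.R) ℕ :=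
  mkFun (arS ar S) (Sum.inr μ) (fun i => varT i)

def srcRules {ar : Sig → ℕ} (S : RuleSys Sig ar) :
    Set (PTerm (Sig ⊕ S.R) ℕ × PTerm (Sig ⊕ S.R) ℕ) :=
  {lr | ∃ μ : S.R, lr = (ruleHead S μ, liftT S (S.lhs μ))}

def tgtRules {ar : Sig → ℕ} (S : RuleSys Sig ar) :
    Set (PTerm (Sig ⊕ S.R) ℕ × PTerm (Sig ⊕ S.R) ℕ) :=
  {lr | ∃ μ : S.R, lr = (ruleHead S μ, liftT S (S.rhs μ))}

section Terms

variable {Sig V : Type}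

lemma varT_injective : Function.Injective (varT (Sig := Sig) (V := V)) :=
  fun _ _ h => by simpa [varT] using congrFun h []

lemma substExt_eq_of_unique (σ : V → PTerm Sig V) (t : PTerm Sig V) {p q : Pos}
    {x : V} (hw : ∃ p₀, p = p₀ ++ q ∧ t p₀ = some (Sum.inr x))
    (huniq : ∀ (x' : V) (p₀ q' : Pos), p = p₀ ++ q' → t p₀ = some (Sum.inr x') →
      x' = x ∧ q' = q) :
    substExt σ t p = σ x q := by
  obtain ⟨p₀, hpq, ht⟩ := hw
  have h : ∃ x : V, ∃ p₀ q : Pos, p = p₀ ++ q ∧ t p₀ = some (Sum.inr x) := ⟨x, p₀, q, hpq, ht⟩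
  rw [substExt, dif_pos h]
  obtain ⟨heq, hr⟩ := h.choose_spec.choose_spec.choose_spec
  obtain ⟨hx, hq⟩ := huniq _ _ _ heq hr
  exact congrArg₂ σ hx hq

def EqUpTo (n : ℕ) (t u : PTerm Sig V) : Prop := ∀ p : Pos, p.length ≤ n → t p = u p

/-- Closedness for the metric `tdist`, phrased through agreement up to every depth. -/
def IsLimitClosed (P : PTerm Sig V → Prop) : Prop :=
  ∀ u, (∀ n, ∃ t, P t ∧ EqUpTo n t u) → P u

lemma eqUpTo_of_tdist_lt {t u : PTerm Sig V} {n : ℕ} (h : tdist t u < (2 : ℝ)⁻¹ ^ n) :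
    EqUpTo n t u := by
  intro p hp
  by_contra hne
  have htu : t ≠ u := fun h => hne (congrFun h p)
  rw [tdist, if_neg htu, pow_lt_pow_iff_right_of_lt_one₀ (by norm_num) (by norm_num)] at h
  have := Nat.sInf_le (show p.length ∈ {m : ℕ | ∃ q : Pos, q.length = m ∧ t q ≠ u q} from
    ⟨p, rfl, hne⟩)
  omega

lemma IsLimitClosed.of_tdist_tendsto {P : PTerm Sig V → Prop} (hP : IsLimitClosed P)
    {γ : Ordinal} (hγ : Order.IsSuccLimit γ) {f : Ordinal → PTerm Sig V}
    (hf : ∀ α < γ, P (f α)) {w : PTerm Sig V}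
    (hlim : ∀ n : ℕ, ∃ α₀ < γ, ∀ α, α₀ < α → α < γ → tdist (f α) w < (2 : ℝ)⁻¹ ^ n) :
    P w :=
  hP w fun n => by
    obtain ⟨α₀, hα₀, hclose⟩ := hlim n
    have hsucc := hγ.succ_lt hα₀
    exact ⟨f _, hf _ hsucc, eqUpTo_of_tdist_lt (hclose _ (Order.lt_succ α₀) hsucc)⟩

lemma isLimitClosed_isTerm (ar : Sig → ℕ) : IsLimitClosed (IsTerm (V := V) ar) := by
  intro u happ
  refine ⟨?_, fun p q hpq => ?_, fun p h hp i => ?_⟩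
  · obtain ⟨t, ht, htu⟩ := happ 0
    simpa [posOf, ← htu [] le_rfl] using ht.1
  · obtain ⟨t, ht, htu⟩ := happ (p ++ q).length
    have := ht.2.1 p q (by simpa [posOf, htu (p ++ q) le_rfl] using hpq)
    simpa [posOf, htu p (by simp)] using this
  · obtain ⟨t, ht, htu⟩ := happ (p.length + 1)
    have := ht.2.2 p h (by rw [htu p (by omega), hp]) i
    simpa [posOf, htu (p ++ [i]) (by simp)] using this

end Terms

namespace RedSeq

variable {Sig V : Type} {ar : Sig → ℕ} {rules : Set (PTerm Sig V × PTerm Sig V)}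
  {β : Ordinal} (Sq : RedSeq ar rules β) {P : PTerm Sig V → Prop}

theorem src_of_isLimitClosed (h0 : P (Sq.src 0))
    (hstep : ∀ α < β, P (Sq.src α) → P (Sq.tgt α)) (hP : IsLimitClosed P) :
    ∀ α < β, P (Sq.src α) := by
  intro α
  induction α using WellFoundedLT.induction with
  | _ α ih =>
    intro hα
    rcases Ordinal.zero_or_succ_or_isSuccLimit α with rfl | ⟨γ, rfl⟩ | hlim
    · exact h0
    · have hγ : γ < β := (Order.lt_succ γ).trans hα
      rw [Order.succ_eq_add_one] at hα ⊢
      rw [Sq.succCoh γ hα]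
      exact hstep γ hγ (ih γ (Order.lt_succ γ) hγ)
    · refine hP.of_tdist_tendsto hlim (fun γ hγ => ?_) (Sq.limSrc α hα hlim)
      exact hstep γ (hγ.trans hα) (ih γ hγ (hγ.trans hα))

theorem of_converges_of_isLimitClosed (h0 : P (Sq.src 0))
    (hstep : ∀ α < β, P (Sq.src α) → P (Sq.tgt α)) (hP : IsLimitClosed P)
    {u : PTerm Sig V} (hu : Sq.Converges u) : P u := by
  have hsrc := Sq.src_of_isLimitClosed h0 hstep hP
  rcases hu with ⟨-, rfl⟩ | ⟨α, rfl, rfl⟩ | ⟨hlim, hclose, -⟩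
  · exact h0
  · exact hstep α (lt_add_one α) (hsrc α (lt_add_one α))
  · exact hP.of_tdist_tendsto hlim (fun α hα => hstep α hα (hsrc α hα)) hclose

end RedSeq

section RuleSymbols

variable {Sig : Type} {ar : Sig → ℕ} (S : RuleSys Sig ar)

lemma liftT_varT (j : ℕ) : liftT S (varT j) = (varT j : PTerm (Sig ⊕ S.R) ℕ) := by
  funext p
  simp only [liftT, varT]
  split <;> rfl

lemma eq_of_ruleHead_eq_inr {μ : S.R} {p : Pos} {x : ℕ}
    (h : ruleHead S μ p = some (Sum.inr x)) : p = [x] ∧ 1 ≤ x ∧ x ≤ S.rar μ := by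
  match p with
  | [] => simp [ruleHead, mkFun] at h
  | i :: q =>
    simp only [ruleHead, mkFun, arS, varT] at h
    by_cases hi : 1 ≤ i ∧ i ≤ S.rar μ
    · by_cases hq : q = []
      · obtain rfl : i = x := by simpa [hi, hq] using h
        exact ⟨by rw [hq], hi⟩
      · simp [hi, hq] at h
    · simp [hi] at h

lemma substExt_varT (σ : ℕ → PTerm (Sig ⊕ S.R) ℕ) (j : ℕ) : substExt σ (varT j) = σ j := by
  funext p
  refine substExt_eq_of_unique σ _ ⟨[], by simp, rfl⟩ fun x p₀ q hpq ht => ?_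
  simp only [varT] at ht
  split_ifs at ht with hp₀
  subst hp₀
  exact ⟨by simpa using ht.symm, hpq.symm⟩

lemma substExt_ruleHead_nil (σ : ℕ → PTerm (Sig ⊕ S.R) ℕ) (μ : S.R) :
    substExt σ (ruleHead S μ) [] = some (Sum.inl (Sum.inr μ)) := by
  rw [substExt, dif_neg]
  · rfl
  · rintro ⟨x, p₀, q, hpq, hr⟩
    obtain ⟨rfl, -⟩ := eq_of_ruleHead_eq_inr S hr
    simp at hpq

lemma substExt_ruleHead_cons (σ : ℕ → PTerm (Sig ⊕ S.R) ℕ) (μ : S.R) (i : ℕ) (q : Pos) :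
    substExt σ (ruleHead S μ) (i :: q) = if 1 ≤ i ∧ i ≤ S.rar μ then σ i q else none := by
  split_ifs with hi
  · refine substExt_eq_of_unique σ _ ⟨[i], rfl, ?_⟩ fun x p₀ q' hpq ht => ?_
    · simp [ruleHead, mkFun, arS, varT, hi]
    · obtain ⟨rfl, -⟩ := eq_of_ruleHead_eq_inr S ht
      simp only [List.singleton_append, List.cons.injEq] at hpq
      exact ⟨hpq.1.symm, hpq.2.symm⟩
  · rw [substExt, dif_neg]
    · simp [ruleHead, mkFun, arS, hi]
    · rintro ⟨x, p₀, q', hpq, hr⟩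
      obtain ⟨rfl, hx⟩ := eq_of_ruleHead_eq_inr S hr
      simp only [List.singleton_append, List.cons.injEq] at hpq
      exact hi (hpq.1 ▸ hx)

lemma eq_substExt_ruleHead {u : PTerm (Sig ⊕ S.R) ℕ} (hu : IsTerm (arS ar S) u) {μ : S.R}
    (hμ : u [] = some (Sum.inl (Sum.inr μ))) :
    u = substExt (fun i => subAt u [i]) (ruleHead S μ) := by
  funext q
  match q with
  | [] => rw [substExt_ruleHead_nil, hμ]
  | i :: q =>
    rw [substExt_ruleHead_cons]
    split_ifs with hi
    · rfl
    · by_contra hne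
      have hchild : [i] ∈ posOf u :=
        hu.2.1 [i] q (by simpa [posOf, Option.isSome_iff_ne_none] using hne)
      exact hi (by simpa [arS, arity] using (hu.2.2 [] _ hμ i).mp hchild)

lemma not_NF_of_root_eq {u : PTerm (Sig ⊕ S.R) ℕ} (hu : IsTerm (arS ar S) u) {μ : S.R}
    (hμ : u [] = some (Sum.inl (Sum.inr μ))) : ¬ NF (tgtRules S) u := fun hNF =>
  hNF [] _ ⟨by simp [posOf, hμ], _, ⟨μ, rfl⟩, _, eq_substExt_ruleHead S hu hμ, rfl⟩

lemma IsStep.eq_replAt_of_collapsing {s t : PTerm (Sig ⊕ S.R) ℕ} {p : Pos}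
    (hstep : IsStep (tgtRules S) s p t) {μ : S.R} (hμ : s p = some (Sum.inl (Sum.inr μ)))
    {j : ℕ} (hj : 1 ≤ j ∧ j ≤ S.rar μ) (hrhs : S.rhs μ = varT j) :
    t = replAt s (subAt s (p ++ [j])) p := by
  obtain ⟨-, -, ⟨μ₀, rfl⟩, σ, hmatch, rfl⟩ := hstep
  have hroot := congrFun hmatch []
  rw [substExt_ruleHead_nil] at hroot
  obtain rfl : μ₀ = μ := by simpa [subAt, hμ] using hroot.symm
  have hσ : σ j = subAt s (p ++ [j]) := funext fun q => by
    have := congrFun hmatch (j :: q)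
    rw [substExt_ruleHead_cons, if_pos hj] at this
    simpa [subAt] using this.symm
  simp only [hrhs, liftT_varT, substExt_varT, hσ]

end RuleSymbols

section Collapsing

variable {Sig : Type} {ar : Sig → ℕ} {S : RuleSys Sig ar}

variable (S) in
def HasCollSeqInf (t : PTerm (Sig ⊕ S.R) ℕ) : Prop :=
  ∃ ps : ℕ → Pos, ps 0 = [] ∧ CollSeqInf S t ps

namespace CollSeqInf

variable {t : PTerm (Sig ⊕ S.R) ℕ} {ps : ℕ → Pos} (hc : CollSeqInf S t ps)
include hc

lemma length_eq (h0 : ps 0 = []) (i : ℕ) : (ps i).length = i := by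
  induction i with
  | zero => simp [h0]
  | succ i ih =>
    obtain ⟨_, _, -, -, -, -, hsucc⟩ := hc i
    simp [hsucc, ih]

lemma prefix_of_le {i i' : ℕ} (h : i ≤ i') : ps i <+: ps i' := by
  induction h with
  | refl => exact List.prefix_refl _
  | step _ ih =>
    obtain ⟨_, _, -, -, -, -, hsucc⟩ := hc _
    rw [hsucc]
    exact ih.trans (List.prefix_append _ _)

lemma eq_of_prefix (h0 : ps 0 = []) {p : Pos} {i : ℕ} (hp : p <+: ps i) :
    p = ps p.length := by
  have hlen := hc.length_eq h0
  have hle : p.length ≤ i := by simpa [hlen] using hp.length_le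
  exact (List.prefix_of_prefix_length_le hp (hc.prefix_of_le hle) (by rw [hlen])).eq_of_length
    (by rw [hlen])

lemma of_eq_on {t' : PTerm (Sig ⊕ S.R) ℕ} (h : ∀ i, t' (ps i) = t (ps i)) :
    CollSeqInf S t' ps := fun i => by
  obtain ⟨μ, j, hμ, rest⟩ := hc i
  exact ⟨μ, j, (h i).trans hμ, rest⟩

/-- Collapsing the `k`-th rule symbol of the sequence deletes the `k`-th step of its path. -/
lemma replAt_subAt (h0 : ps 0 = []) (k : ℕ) :
    CollSeqInf S (replAt t (subAt t (ps (k + 1))) (ps k))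
      (fun i => if i ≤ k then ps i else ps k ++ (ps (i + 1)).drop (k + 1)) := by
  set ps' : ℕ → Pos := fun i => if i ≤ k then ps i else ps k ++ (ps (i + 1)).drop (k + 1)
  have hlen := hc.length_eq h0
  have htail : ∀ i, k ≤ i → ps' i = ps k ++ (ps (i + 1)).drop (k + 1) := by
    intro i hki
    rcases hki.eq_or_lt with rfl | hlt
    · simp [ps', List.drop_eq_nil_of_le (hlen (k + 1)).le]
    · simp [ps', hlt.not_ge]
  have hsplit : ∀ i, k ≤ i → ps (k + 1) ++ (ps (i + 1)).drop (k + 1) = ps (i + 1) := by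
    intro i hki
    obtain ⟨r, hr⟩ := hc.prefix_of_le (show k + 1 ≤ i + 1 by omega)
    rw [← hr, List.drop_left' (hlen _)]
  intro i
  rcases lt_or_ge i k with hik | hki
  · obtain ⟨μ, j, hμ, hj1, hj2, hrhs, hsucc⟩ := hc i
    refine ⟨μ, j, ?_, hj1, hj2, hrhs, ?_⟩
    · have hnot : ¬ ps k <+: ps i := fun h => by
        have := h.length_le
        rw [hlen, hlen] at this
        omega
      simpa [ps', hik.le, replAt, hnot] using hμ
    · simpa [ps', hik.le, hik] using hsucc
  · obtain ⟨μ, j, hμ, hj1, hj2, hrhs, hsucc⟩ := hc (i + 1)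
    refine ⟨μ, j, ?_, hj1, hj2, hrhs, ?_⟩
    · rw [htail i hki]
      simpa [replAt, subAt, hsplit i hki] using hμ
    · rw [htail (i + 1) (by omega), htail i hki, hsucc,
        List.drop_append_of_le_length (by rw [hlen]; omega), List.append_assoc]

end CollSeqInf

end Collapsing

section Invariance

variable {Sig : Type} {ar : Sig → ℕ} (S : RuleSys Sig ar)

lemma HasCollSeqInf.of_isStep {s t : PTerm (Sig ⊕ S.R) ℕ} {p : Pos}
    (hstep : IsStep (tgtRules S) s p t) (hs : HasCollSeqInf S s) : HasCollSeqInf S t := by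
  obtain ⟨ps, h0, hc⟩ := hs
  by_cases hon : ∃ i, p <+: ps i
  · obtain ⟨i, hi⟩ := hon
    set k := p.length
    have hp : p = ps k := hc.eq_of_prefix h0 hi
    obtain ⟨μ, j, hμ, hj1, hj2, hrhs, hsucc⟩ := hc k
    have ht : t = replAt s (subAt s (ps (k + 1))) (ps k) := by
      rw [hsucc, ← hp]
      exact hstep.eq_replAt_of_collapsing S (hp ▸ hμ) ⟨hj1, hj2⟩ hrhs
    exact ⟨_, by simp [h0], ht ▸ hc.replAt_subAt h0 k⟩
  · simp only [not_exists] at hon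
    obtain ⟨-, -, -, -, -, rfl⟩ := hstep
    exact ⟨ps, h0, hc.of_eq_on fun i => by simp [replAt, hon i]⟩

open Classical in
noncomputable def nextCollPos (u : PTerm (Sig ⊕ S.R) ℕ) (p : Pos) : Pos :=
  if h : ∃ (μ : S.R) (j : ℕ), u p = some (Sum.inl (Sum.inr μ)) ∧ 1 ≤ j ∧ j ≤ S.rar μ ∧
      S.rhs μ = varT j then p ++ [h.choose_spec.choose] else p

/-- Since a collapsing rule symbol determines the argument to descend into, the collapsing
sequence from the root, if any, is this one. -/
noncomputable def collPath (u : PTerm (Sig ⊕ S.R) ℕ) (i : ℕ) : Pos :=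
  (nextCollPos S u)^[i] []

lemma nextCollPos_eq {u : PTerm (Sig ⊕ S.R) ℕ} {p : Pos} {μ : S.R} {j : ℕ}
    (hμ : u p = some (Sum.inl (Sum.inr μ))) (hj : 1 ≤ j ∧ j ≤ S.rar μ)
    (hrhs : S.rhs μ = varT j) : nextCollPos S u p = p ++ [j] := by
  have hex : ∃ (μ : S.R) (j : ℕ), u p = some (Sum.inl (Sum.inr μ)) ∧ 1 ≤ j ∧ j ≤ S.rar μ ∧
      S.rhs μ = varT j := ⟨μ, j, hμ, hj.1, hj.2, hrhs⟩
  rw [nextCollPos, dif_pos hex]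
  obtain ⟨hμ', -, -, hrhs'⟩ := hex.choose_spec.choose_spec
  obtain rfl : hex.choose = μ := by simpa [hμ] using hμ'.symm
  rw [varT_injective (hrhs'.symm.trans hrhs)]

lemma CollSeqInf.eq_collPath {t u : PTerm (Sig ⊕ S.R) ℕ} {ps : ℕ → Pos}
    (hc : CollSeqInf S t ps) (h0 : ps 0 = []) {n : ℕ} (htu : EqUpTo n t u) :
    ∀ k ≤ n + 1, ps k = collPath S u k := by
  intro k hk
  induction k with
  | zero => exact h0
  | succ k ih =>
    obtain ⟨μ, j, hμ, hj1, hj2, hrhs, hsucc⟩ := hc k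
    rw [collPath, Function.iterate_succ_apply', ← collPath, ← ih (by omega), hsucc]
    rw [htu _ (by rw [hc.length_eq h0]; omega)] at hμ
    exact (nextCollPos_eq S hμ ⟨hj1, hj2⟩ hrhs).symm

lemma isLimitClosed_hasCollSeqInf : IsLimitClosed (HasCollSeqInf S) := by
  intro u happ
  refine ⟨collPath S u, rfl, fun i => ?_⟩
  obtain ⟨t, ⟨ps, h0, hc⟩, htu⟩ := happ i
  obtain ⟨μ, j, hμ, hj1, hj2, hrhs, hsucc⟩ := hc i
  have hpath := hc.eq_collPath S h0 htu
  refine ⟨μ, j, ?_, hj1, hj2, hrhs, ?_⟩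
  · rw [← hpath i (by omega), ← htu _ (by rw [hc.length_eq h0])]
    exact hμ
  · rw [← hpath i (by omega), ← hpath (i + 1) le_rfl, hsucc]

lemma HasCollSeqInf.not_NF {u : PTerm (Sig ⊕ S.R) ℕ} (hu : IsTerm (arS ar S) u)
    (hcoll : HasCollSeqInf S u) : ¬ NF (tgtRules S) u := by
  obtain ⟨ps, h0, hc⟩ := hcoll
  obtain ⟨μ, -, hμ, -⟩ := hc 0
  exact not_NF_of_root_eq S hu (h0 ▸ hμ)

end Invariance

theorem stmt16_general {Sig : Type} {ar : Sig → ℕ} (S : RuleSys Sig ar)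
    (ψ : PTerm (Sig ⊕ S.R) ℕ) (hterm : IsTerm (arS ar S) ψ)
    (hcoll : ∃ ps : ℕ → Pos, ps 0 = [] ∧ CollSeqInf S ψ ps) :
    ∀ (β : Ordinal) (Sq : RedSeq (arS ar S) (tgtRules S) β)
      (u : PTerm (Sig ⊕ S.R) ℕ),
      Sq.src 0 = ψ → Sq.Converges u → ¬ NF (tgtRules S) u := by
  intro β Sq u hψ hu
  subst hψ
  have hterm_u : IsTerm (arS ar S) u :=
    Sq.of_converges_of_isLimitClosed hterm (fun α hα _ => Sq.tgtTerm α hα)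
      (isLimitClosed_isTerm _) hu
  have hcoll_u : HasCollSeqInf S u :=
    Sq.of_converges_of_isLimitClosed hcoll
      (fun α hα => HasCollSeqInf.of_isStep S (Sq.isStep α hα)) (isLimitClosed_hasCollSeqInf S) hu
  exact hcoll_u.not_NF S hterm_u

/-- A multistep admitting an infinite collapsing sequence starting at the root is
not weakly normalizing in `tgt_T`: no (strongly convergent) `tgt_T`-reduction from
it reaches a normal form. -/
theorem stmt16 {Sig : Type} {ar : Sig → ℕ} (S : RuleSys Sig ar)
    (ψ : PTerm (Sig ⊕ S.R) ℕ) (hterm : IsTerm (arS ar S) ψ) (hclosed : Closed ψ)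
    (hcoll : ∃ ps : ℕ → Pos, ps 0 = [] ∧ CollSeqInf S ψ ps) :
    ∀ (β : Ordinal) (Sq : RedSeq (arS ar S) (tgtRules S) β)
      (u : PTerm (Sig ⊕ S.R) ℕ),
      Sq.src 0 = ψ → Sq.Converges u → ¬ NF (tgtRules S) u :=
  stmt16_general S ψ hterm hcoll

end IRW
end
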